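/- Negative focal substitution: if Γ ; L ⊢ ⟨A⁻⟩ is derivable and Γ ; [A⁻] ⊢ U is derivable in the focused sequent calculus for polarized intuitionistic logic, then Γ ; L ⊢ U is derivable. -/

import Mathlib

namespace StructuralFocalization

/- Polarized propositional intuitionistic logic -/
mutual
inductive PProp : Type
  | atom : Nat → PProp
  | down : NProp → PProp
  | bot  : PProp
  | or   : PProp → PProp → PProp
  | top  : PProp
  | and  : PProp → PProp → PProp
inductive NProp : Type
  | atom : Nat → NProp
  | up   : PProp → NProp
  | imp  : PProp → NProp → NProp
  | top  : NProp
  | and  : NProp → NProp → NProp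
end

/- Hypotheses: negative propositions or suspended positives ⟨A⁺⟩ -/
inductive Hyp : Type
  | neg  : NProp → Hyp
  | susp : PProp → Hyp

/- Succedents: A⁺, A⁻, or suspended ⟨A⁻⟩ -/
inductive Succ : Type
  | pos  : PProp → Succ
  | neg  : NProp → Succ
  | susp : NProp → Succ

abbrev Ctx := List Hyp

def Succ.stable : Succ → Prop
  | .pos _ => True
  | .susp _ => True
  | .neg _ => False

def Hyp.suspNormal : Hyp → Prop
  | .susp (PProp.atom _) => True
  | .susp _ => False
  | .neg _ => True

def Ctx.suspNormal (Γ : Ctx) : Prop := ∀ h ∈ Γ, h.suspNormal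

def Succ.suspNormal : Succ → Prop
  | .susp (NProp.atom _) => True
  | .susp _ => False
  | _ => True

/- The focused sequent calculus (Figures 3 and 4 of "Structural focalization",
   with the generalized id⁺/id⁻ rules for arbitrary suspended propositions). -/
mutual
/-- Right focus: Γ ⊢ [A⁺] -/
inductive RFoc : Ctx → PProp → Prop
  | idP {Γ A} : Hyp.susp A ∈ Γ → RFoc Γ A
  | downR {Γ A} : Inv Γ [] (Succ.neg A) → RFoc Γ (PProp.down A)
  | orR1 {Γ A B} : RFoc Γ A → RFoc Γ (PProp.or A B)
  | orR2 {Γ A B} : RFoc Γ B → RFoc Γ (PProp.or A B)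
  | topR {Γ} : RFoc Γ PProp.top
  | andR {Γ A B} : RFoc Γ A → RFoc Γ B → RFoc Γ (PProp.and A B)
/-- Inversion: Γ ; Ω ⊢ U -/
inductive Inv : Ctx → List PProp → Succ → Prop
  | focR {Γ A} : RFoc Γ A → Inv Γ [] (Succ.pos A)
  | focL {Γ A U} : Hyp.neg A ∈ Γ → Succ.stable U → LFoc Γ A U → Inv Γ [] U
  | etaP {Γ p Ω U} : Inv (Hyp.susp (PProp.atom p) :: Γ) Ω U → Inv Γ (PProp.atom p :: Ω) U
  | downL {Γ A Ω U} : Inv (Hyp.neg A :: Γ) Ω U → Inv Γ (PProp.down A :: Ω) U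
  | botL {Γ Ω U} : Inv Γ (PProp.bot :: Ω) U
  | orL {Γ A B Ω U} : Inv Γ (A :: Ω) U → Inv Γ (B :: Ω) U → Inv Γ (PProp.or A B :: Ω) U
  | topPL {Γ Ω U} : Inv Γ Ω U → Inv Γ (PProp.top :: Ω) U
  | andPL {Γ A B Ω U} : Inv Γ (A :: B :: Ω) U → Inv Γ (PProp.and A B :: Ω) U
  | etaN {Γ p} : Inv Γ [] (Succ.susp (NProp.atom p)) → Inv Γ [] (Succ.neg (NProp.atom p))
  | upR {Γ A} : Inv Γ [] (Succ.pos A) → Inv Γ [] (Succ.neg (NProp.up A))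
  | impR {Γ A B} : Inv Γ [A] (Succ.neg B) → Inv Γ [] (Succ.neg (NProp.imp A B))
  | topNR {Γ} : Inv Γ [] (Succ.neg NProp.top)
  | andNR {Γ A B} : Inv Γ [] (Succ.neg A) → Inv Γ [] (Succ.neg B) →
      Inv Γ [] (Succ.neg (NProp.and A B))
/-- Left focus: Γ ; [A⁻] ⊢ U -/
inductive LFoc : Ctx → NProp → Succ → Prop
  | idN {Γ A} : LFoc Γ A (Succ.susp A)
  | upL {Γ A U} : Inv Γ [A] U → LFoc Γ (NProp.up A) U
  | impL {Γ A B U} : RFoc Γ A → LFoc Γ B U → LFoc Γ (NProp.imp A B) U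
  | andL1 {Γ A B U} : LFoc Γ A U → LFoc Γ (NProp.and A B) U
  | andL2 {Γ A B U} : LFoc Γ B U → LFoc Γ (NProp.and A B) U
end

/- Unpolarized propositions and Kleene's G3 -/
inductive UProp : Type
  | atom : Nat → UProp
  | bot  : UProp
  | or   : UProp → UProp → UProp
  | top  : UProp
  | and  : UProp → UProp → UProp
  | imp  : UProp → UProp → UProp

inductive G3 : List UProp → UProp → Prop
  | init {Γ p} : UProp.atom p ∈ Γ → G3 Γ (UProp.atom p)
  | botL {Γ Q} : UProp.bot ∈ Γ → G3 Γ Q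
  | orR1 {Γ A B} : G3 Γ A → G3 Γ (UProp.or A B)
  | orR2 {Γ A B} : G3 Γ B → G3 Γ (UProp.or A B)
  | orL {Γ A B Q} : UProp.or A B ∈ Γ → G3 (A :: Γ) Q → G3 (B :: Γ) Q → G3 Γ Q
  | topR {Γ} : G3 Γ UProp.top
  | andR {Γ A B} : G3 Γ A → G3 Γ B → G3 Γ (UProp.and A B)
  | andL1 {Γ A B Q} : UProp.and A B ∈ Γ → G3 (A :: Γ) Q → G3 Γ Q
  | andL2 {Γ A B Q} : UProp.and A B ∈ Γ → G3 (B :: Γ) Q → G3 Γ Q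
  | impR {Γ A B} : G3 (A :: Γ) B → G3 Γ (UProp.imp A B)
  | impL {Γ A B Q} : UProp.imp A B ∈ Γ → G3 Γ A → G3 (B :: Γ) Q → G3 Γ Q

/-- G3 with an ordered auxiliary context Ψ: Γ; Ψ ⊢ Q -/
inductive G3Psi : List UProp → List UProp → UProp → Prop
  | cons {Γ P Ψ Q} : G3Psi (P :: Γ) Ψ Q → G3Psi Γ (P :: Ψ) Q
  | nil {Γ Q} : G3 Γ Q → G3Psi Γ [] Q

/- Erasure -/
mutual
def eraseP : PProp → UProp
  | .atom p => .atom p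
  | .down A => eraseN A
  | .bot => .bot
  | .or A B => .or (eraseP A) (eraseP B)
  | .top => .top
  | .and A B => .and (eraseP A) (eraseP B)
def eraseN : NProp → UProp
  | .atom p => .atom p
  | .up A => eraseP A
  | .imp A B => .imp (eraseP A) (eraseN B)
  | .top => .top
  | .and A B => .and (eraseN A) (eraseN B)
end

def eraseHyp : Hyp → UProp
  | .neg A => eraseN A
  | .susp A => eraseP A

def eraseCtx (Γ : Ctx) : List UProp := Γ.map eraseHyp

def eraseSucc : Succ → UProp
  | .pos A => eraseP A
  | .neg A => eraseN A
  | .susp A => eraseN A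

/-!
Induct on the derivation of `Γ ; L ⊢ ⟨A⁻⟩`: each `id⁻` leaf `Γ' ; [A⁻] ⊢ ⟨A⁻⟩`, where `Γ'`
extends `Γ`, is replaced by the weakened derivation of `Γ' ; [A⁻] ⊢ U`, and every other rule is
re-applied. The one obstacle is `focL`, which demands a stable succedent while `U` may be a
negative proposition `N`. For such `N`, `focL` is admissible by induction on `N`: the right
inversion rule for `N` is commuted below the focus, and the antecedent of an implication is first
inverted completely into its patterns so that the focus can be taken with an empty inversion
context.
-/
mutual
theorem RFoc.mono {Γ Γ' : Ctx} {A : PProp} (hs : Γ ⊆ Γ') : RFoc Γ A → RFoc Γ' A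
  | .idP h => .idP (hs h)
  | .downR d => .downR (d.mono hs)
  | .orR1 d => .orR1 (d.mono hs)
  | .orR2 d => .orR2 (d.mono hs)
  | .topR => .topR
  | .andR d e => .andR (d.mono hs) (e.mono hs)

theorem Inv.mono {Γ Γ' : Ctx} {Ω : List PProp} {U : Succ} (hs : Γ ⊆ Γ') :
    Inv Γ Ω U → Inv Γ' Ω U
  | .focR d => .focR (d.mono hs)
  | .focL h st d => .focL (hs h) st (d.mono hs)
  | .etaP d => .etaP (d.mono (List.cons_subset_cons _ hs))
  | .downL d => .downL (d.mono (List.cons_subset_cons _ hs))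
  | .botL => .botL
  | .orL d e => .orL (d.mono hs) (e.mono hs)
  | .topPL d => .topPL (d.mono hs)
  | .andPL d => .andPL (d.mono hs)
  | .etaN d => .etaN (d.mono hs)
  | .upR d => .upR (d.mono hs)
  | .impR d => .impR (d.mono hs)
  | .topNR => .topNR
  | .andNR d e => .andNR (d.mono hs) (e.mono hs)

theorem LFoc.mono {Γ Γ' : Ctx} {A : NProp} {U : Succ} (hs : Γ ⊆ Γ') :
    LFoc Γ A U → LFoc Γ' A U
  | .idN => .idN
  | .upL d => .upL (d.mono hs)
  | .impL r d => .impL (r.mono hs) (d.mono hs)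
  | .andL1 d => .andL1 (d.mono hs)
  | .andL2 d => .andL2 (d.mono hs)
end

/-- `Pattern A Δ`: `Δ` is the context produced by one branch of the complete left inversion of
`A`, so that `Γ ; A :: Ω ⊢ U` holds exactly when `Δ ++ Γ ; Ω ⊢ U` holds for every such `Δ`. -/
inductive Pattern : PProp → Ctx → Prop
  | atom {p} : Pattern (.atom p) [.susp (.atom p)]
  | down {A} : Pattern (.down A) [.neg A]
  | or1 {A B Δ} : Pattern A Δ → Pattern (.or A B) Δ
  | or2 {A B Δ} : Pattern B Δ → Pattern (.or A B) Δ
  | top : Pattern .top []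
  | and {A B Δ₁ Δ₂} : Pattern A Δ₁ → Pattern B Δ₂ → Pattern (.and A B) (Δ₂ ++ Δ₁)

theorem Pattern.subst {A : PProp} {Δ Γ : Ctx} {Ω : List PProp} {U : Succ} :
    Pattern A Δ → Δ ⊆ Γ → Inv Γ (A :: Ω) U → Inv Γ Ω U
  | .atom, hs, .etaP d => d.mono (List.cons_subset.2 ⟨hs (.head _), .refl _⟩)
  | .down, hs, .downL d => d.mono (List.cons_subset.2 ⟨hs (.head _), .refl _⟩)
  | .or1 hp, hs, .orL d _ => hp.subst hs d
  | .or2 hp, hs, .orL _ d => hp.subst hs d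
  | .top, _, .topPL d => d
  | .and hp₁ hp₂, hs, .andPL d =>
      hp₂.subst (List.append_subset.1 hs).1 (hp₁.subst (List.append_subset.1 hs).2 d)

theorem Pattern.cover : ∀ {A : PProp} {Γ Ω U},
    (∀ Δ, Pattern A Δ → Inv (Δ ++ Γ) Ω U) → Inv Γ (A :: Ω) U
  | .atom _, _, _, _, h => .etaP (h _ .atom)
  | .down _, _, _, _, h => .downL (h _ .down)
  | .bot, _, _, _, _ => .botL
  | .or _ _, _, _, _, h =>
      .orL (cover fun _ hp => h _ (.or1 hp)) (cover fun _ hp => h _ (.or2 hp))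
  | .top, _, _, _, h => .topPL (h _ .top)
  | .and _ _, Γ, _, _, h => .andPL <| cover fun Δ₁ hp₁ => cover fun Δ₂ hp₂ =>
      List.append_assoc Δ₂ Δ₁ Γ ▸ h _ (.and hp₁ hp₂)

/- An unstable succedent can only be closed by a right inversion rule under an empty `Ω`, so
rewriting those leaves rewrites the whole derivation. -/
mutual
theorem Inv.replaceUnstable {Γ : Ctx} {Ω : List PProp} {S V : Succ} (hS : ¬ S.stable)
    (hV : ∀ Γ', Γ ⊆ Γ' → Inv Γ' [] S → Inv Γ' [] V) : Inv Γ Ω S → Inv Γ Ω V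
  | .focR _ => (hS trivial).elim
  | .focL _ st _ => (hS st).elim
  | .etaP d => .etaP (d.replaceUnstable hS fun _ hs => hV _ (List.cons_subset.1 hs).2)
  | .downL d => .downL (d.replaceUnstable hS fun _ hs => hV _ (List.cons_subset.1 hs).2)
  | .botL => .botL
  | .orL d e => .orL (d.replaceUnstable hS hV) (e.replaceUnstable hS hV)
  | .topPL d => .topPL (d.replaceUnstable hS hV)
  | .andPL d => .andPL (d.replaceUnstable hS hV)
  | d@(.etaN _) => hV _ (.refl _) d
  | d@(.upR _) => hV _ (.refl _) d
  | d@(.impR _) => hV _ (.refl _) d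
  | d@.topNR => hV _ (.refl _) d
  | d@(.andNR _ _) => hV _ (.refl _) d

theorem LFoc.replaceUnstable {Γ : Ctx} {B : NProp} {S V : Succ} (hS : ¬ S.stable)
    (hV : ∀ Γ', Γ ⊆ Γ' → Inv Γ' [] S → Inv Γ' [] V) : LFoc Γ B S → LFoc Γ B V
  | .idN => (hS trivial).elim
  | .upL d => .upL (d.replaceUnstable hS hV)
  | .impL r d => .impL r (d.replaceUnstable hS hV)
  | .andL1 d => .andL1 (d.replaceUnstable hS hV)
  | .andL2 d => .andL2 (d.replaceUnstable hS hV)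
end

section RightInversion

variable {Γ : Ctx}

theorem Inv.neg_atom_iff {p : Nat} : Inv Γ [] (.neg (.atom p)) ↔ Inv Γ [] (.susp (.atom p)) :=
  ⟨fun | .focL _ st _ => st.elim | .etaN d => d, .etaN⟩

theorem Inv.neg_up_iff {A : PProp} : Inv Γ [] (.neg (.up A)) ↔ Inv Γ [] (.pos A) :=
  ⟨fun | .focL _ st _ => st.elim | .upR d => d, .upR⟩

theorem Inv.neg_imp_iff {A : PProp} {B : NProp} :
    Inv Γ [] (.neg (.imp A B)) ↔ Inv Γ [A] (.neg B) :=
  ⟨fun | .focL _ st _ => st.elim | .impR d => d, .impR⟩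

theorem Inv.neg_and_iff {A B : NProp} :
    Inv Γ [] (.neg (.and A B)) ↔ Inv Γ [] (.neg A) ∧ Inv Γ [] (.neg B) :=
  ⟨fun | .focL _ st _ => st.elim | .andNR d e => ⟨d, e⟩, fun ⟨d, e⟩ => .andNR d e⟩

end RightInversion

theorem Inv.focL_neg {Γ : Ctx} {D : NProp} (mem : Hyp.neg D ∈ Γ) :
    ∀ {N : NProp}, LFoc Γ D (.neg N) → Inv Γ [] (.neg N)
  | .atom _, h => .etaN <| .focL mem trivial <| h.replaceUnstable id fun _ _ => Inv.neg_atom_iff.1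
  | .up _, h => .upR <| .focL mem trivial <| h.replaceUnstable id fun _ _ => Inv.neg_up_iff.1
  | .imp _ _, h => .impR <| Pattern.cover fun _ hp =>
      Inv.focL_neg (List.mem_append_right _ mem) <|
        (h.mono (List.subset_append_right _ _)).replaceUnstable id fun _ hs d =>
          hp.subst (List.Subset.trans (List.subset_append_left _ _) hs) (Inv.neg_imp_iff.1 d)
  | .top, _ => .topNR
  | .and _ _, h => .andNR
      (Inv.focL_neg mem (h.replaceUnstable id fun _ _ d => (Inv.neg_and_iff.1 d).1))
      (Inv.focL_neg mem (h.replaceUnstable id fun _ _ d => (Inv.neg_and_iff.1 d).2))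

theorem Inv.focL_of_mem {Γ : Ctx} {D : NProp} {U : Succ} (mem : Hyp.neg D ∈ Γ)
    (h : LFoc Γ D U) : Inv Γ [] U := by
  cases U with
  | pos _ => exact .focL mem trivial h
  | neg _ => exact .focL_neg mem h
  | susp _ => exact .focL mem trivial h

mutual
theorem Inv.focalSubst {Γ : Ctx} {Ω : List PProp} {A : NProp} {S U : Succ} (h : LFoc Γ A U)
    (hS : S = .susp A) : Inv Γ Ω S → Inv Γ Ω U
  | .focL mem _ d => .focL_of_mem mem (LFoc.focalSubst h hS d)
  | .etaP d => .etaP (Inv.focalSubst (h.mono (List.subset_cons_self _ _)) hS d)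
  | .downL d => .downL (Inv.focalSubst (h.mono (List.subset_cons_self _ _)) hS d)
  | .botL => .botL
  | .orL d e => .orL (Inv.focalSubst h hS d) (Inv.focalSubst h hS e)
  | .topPL d => .topPL (Inv.focalSubst h hS d)
  | .andPL d => .andPL (Inv.focalSubst h hS d)
  | .focR _ | .etaN _ | .upR _ | .impR _ | .topNR | .andNR _ _ => nomatch hS

theorem LFoc.focalSubst {Γ : Ctx} {A B : NProp} {S U : Succ} (h : LFoc Γ A U)
    (hS : S = .susp A) : LFoc Γ B S → LFoc Γ B U
  | .idN => Succ.susp.inj hS ▸ h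
  | .upL d => .upL (Inv.focalSubst h hS d)
  | .impL r d => .impL r (LFoc.focalSubst h hS d)
  | .andL1 d => .andL1 (LFoc.focalSubst h hS d)
  | .andL2 d => .andL2 (LFoc.focalSubst h hS d)
end

/-- Negative focal substitution (L ranges over inversion contexts Ω
    and left-focused propositions [B⁻]). -/
theorem negative_focal_substitution {Γ : Ctx} {A : NProp} {U : Succ}
    (h : LFoc Γ A U) :
    (∀ Ω, Inv Γ Ω (Succ.susp A) → Inv Γ Ω U) ∧
    (∀ B, LFoc Γ B (Succ.susp A) → LFoc Γ B U) :=
  ⟨fun _ => Inv.focalSubst h rfl, fun _ => LFoc.focalSubst h rfl⟩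

end StructuralFocalization
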